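/- Let R be a commutative ring, F an R-module with square-zero extension R_F := R ⊕ F, and M an R-module. Then R-module endomorphisms α of M ⊕ (F ⊗_R M) as an R_F-module (where (r,m) acts by (r,m)·(x, y) = (rx, ry + m⊗x)) lifting the identity on the quotient M correspond naturally and bijectively to R-module maps M → F ⊗_R M. In particular, automorphisms of the trivial extension of M to R_F restricting to the identity modulo F are in bijection with Hom_R(M, F ⊗_R M). -/

import Mathlib

/-!
STATEMENT 15: Let `R` be a commutative ring, `F` an `R`-module (defining the square-zero
extension `R_F = R ⊕ F`) and `M` an `R`-module.  Endomorphisms `α` of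
`M ⊕ (F ⊗_R M)` as an `R_F`-module — where `(r, m)` acts by
`(r, m) · (x, y) = (r x, r y + m ⊗ x)` — lifting the identity on the quotient `M`
correspond naturally and bijectively to `R`-linear maps `M → F ⊗_R M`.

`R_F`-linearity of `α` is encoded as: `α` is `R`-linear and commutes with the operators
`θ m : (x, y) ↦ (0, m ⊗ x)` for all `m : F` (these generate the `R_F`-action together
with the `R`-action); lifting the identity means the first component of `α (x, y)` is `x`.
-/

open TensorProduct

variable (R : Type*) [CommRing R]
variable (F M : Type*) [AddCommGroup F] [Module R F] [AddCommGroup M] [Module R M]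

/-- The action operator `θ m : (x, y) ↦ (0, m ⊗ x)` of the square-zero element `m : F`
on `M ⊕ (F ⊗_R M)`. -/
noncomputable def sqZeroAction (m : F) :
    (M × (F ⊗[R] M)) →ₗ[R] (M × (F ⊗[R] M)) :=
  LinearMap.prod 0 ((TensorProduct.mk R F M m).comp (LinearMap.fst R M (F ⊗[R] M)))

/-!
An endomorphism `α` lifting the identity has the form `(x, y) ↦ (x, β x y)`. Commuting with
the operators `θ m` gives `α (0, m ⊗ x) = θ m (α (x, 0)) = (0, m ⊗ x)`, and since the pure
tensors span `F ⊗ M`, `α` is the identity on the summand `F ⊗ M`. Hence `α (x, y) = (x, y + φ x)` with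
`φ := snd ∘ α ∘ inl : M → F ⊗ M`, and conversely every such `φ` defines an admissible `α`.
-/

namespace SqZeroLift

variable {R F M}

@[simp]
theorem sqZeroAction_apply (m : F) (p : M × (F ⊗[R] M)) :
    sqZeroAction R F M m p = (0, m ⊗ₜ p.1) :=
  rfl

noncomputable def shear (φ : M →ₗ[R] F ⊗[R] M) :
    (M × (F ⊗[R] M)) →ₗ[R] (M × (F ⊗[R] M)) :=
  (LinearMap.fst R M _).prod (LinearMap.snd R M _ + φ ∘ₗ LinearMap.fst R M _)

@[simp]
theorem shear_apply (φ : M →ₗ[R] F ⊗[R] M) (p : M × (F ⊗[R] M)) :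
    shear φ p = (p.1, p.2 + φ p.1) :=
  rfl

theorem shear_comp_sqZeroAction (φ : M →ₗ[R] F ⊗[R] M) (m : F) :
    shear φ ∘ₗ sqZeroAction R F M m = sqZeroAction R F M m ∘ₗ shear φ := by
  ext p <;> simp

theorem apply_inr_eq_self {α : (M × (F ⊗[R] M)) →ₗ[R] (M × (F ⊗[R] M))}
    (hlift : ∀ p, (α p).1 = p.1)
    (hcomm : ∀ m : F, α ∘ₗ sqZeroAction R F M m = sqZeroAction R F M m ∘ₗ α)
    (t : F ⊗[R] M) : α (0, t) = (0, t) := by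
  induction t using TensorProduct.induction_on with
  | zero => exact map_zero α
  | tmul m x =>
    simpa [hlift] using LinearMap.congr_fun (hcomm m) (x, 0)
  | add a b ha hb =>
    simpa [ha, hb] using map_add α (0, a) (0, b)

theorem eq_shear {α : (M × (F ⊗[R] M)) →ₗ[R] (M × (F ⊗[R] M))}
    (hlift : ∀ p, (α p).1 = p.1)
    (hcomm : ∀ m : F, α ∘ₗ sqZeroAction R F M m = sqZeroAction R F M m ∘ₗ α) :
    α = shear (LinearMap.snd R M _ ∘ₗ α ∘ₗ LinearMap.inl R M _) := by
  refine LinearMap.prod_ext (LinearMap.ext fun x => ?_) (LinearMap.ext fun t => ?_)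
  · exact Prod.ext (hlift (x, 0)) (by simp)
  · simp [apply_inr_eq_self hlift hcomm]

end SqZeroLift

theorem endomorphisms_lifting_identity_equiv_homs :
    Nonempty
      ({α : (M × (F ⊗[R] M)) →ₗ[R] (M × (F ⊗[R] M)) //
          (∀ p, (α p).1 = p.1) ∧
          (∀ m : F, α ∘ₗ sqZeroAction R F M m = sqZeroAction R F M m ∘ₗ α)} ≃
        (M →ₗ[R] (F ⊗[R] M))) :=
  ⟨{ toFun := fun α => LinearMap.snd R M _ ∘ₗ α.1 ∘ₗ LinearMap.inl R M _
     invFun := fun φ =>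
       ⟨SqZeroLift.shear φ, fun _ => rfl, SqZeroLift.shear_comp_sqZeroAction φ⟩
     left_inv := fun α => Subtype.ext (SqZeroLift.eq_shear α.2.1 α.2.2).symm
     right_inv := fun φ => by ext; simp }⟩
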